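/- Let m ≥ 0 be an integer and let x be a real number with 0 < x < 1. Then ∫₀ˣ log^m(t)·(t/(1−t)) dt = x·Σ_{j=0}^{m} (m+1−j)_j·(−1)^{j+1}·log^{m−j}(x) − log(1−x)·log^m(x) + m·Σ_{j=2}^{m+1} (−1)^{j−1}·C(m−1,j−2)·(j−2)!·Li_j(x)·log^{m+1−j}(x), where C(m−1,j−2) is a binomial coefficient. (Note Li_0(t) = t/(1−t), so the left side is ∫₀ˣ log^m(t)·Li_0(t) dt.) -/

import Mathlib

/-- `Li p x = ∑_{n≥1} x^n / n^p`, the polylogarithm; `Li 0 x = x/(1-x)` for `|x| < 1`. -/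
noncomputable def Li (p : ℕ) (x : ℝ) : ℝ := ∑' n : ℕ, x ^ (n + 1) / (n + 1 : ℝ) ^ p

/-- Pochhammer symbol `(t)_k = t(t+1)⋯(t+k-1)`. -/
noncomputable def poch (t : ℝ) (k : ℕ) : ℝ := ∏ i ∈ Finset.range k, (t + i)

/-! Expanding `t / (1 - t) = ∑_{n ≥ 0} t ^ (n + 1)` and integrating termwise (the series of
`‖t ^ (n + 1) log ^ m t‖` is dominated by a geometric series on `(0, x]`) reduces the integral to
the moments `∫₀ˣ t ^ (n + 1) log ^ m t`. Repeated integration by parts evaluates these as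
`∑_k (-1) ^ k m(m-1)⋯(m-k+1) log ^ (m - k) x · x ^ (n + 2) / (n + 2) ^ (k + 1)`, and summing over
`n` turns `∑_n x ^ (n + 2) / (n + 2) ^ (k + 1)` into `Li (k + 1) x - x`. The `x`-parts give the
Pochhammer sum, the `k = 0` term gives `Li 1 x = -log (1 - x)`, and the remaining terms are the
polylogarithm sum after `m(m-1)⋯(m-k) = m · k! · C(m - 1, k)`. -/

open Real Filter Set MeasureTheory intervalIntegral Topology

lemma tendsto_pow_succ_mul_log_pow_nhdsGT_zero (p q : ℕ) :
    Tendsto (fun t : ℝ => t ^ (p + 1) * log t ^ q) (𝓝[>] 0) (𝓝 0) := by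
  rcases Nat.eq_zero_or_pos q with rfl | hq
  · simpa using ((continuous_pow (p + 1)).tendsto' 0 0 (by simp)).mono_left nhdsWithin_le_nhds
  -- `t ^ (p + 1) * log t ^ q = (log t * t ^ ((p + 1) / q)) ^ q`
  have h := (tendsto_log_mul_rpow_nhdsGT_zero (by positivity : (0 : ℝ) < (p + 1) / q)).pow q
  rw [zero_pow hq.ne'] at h
  refine h.congr' ?_
  filter_upwards [self_mem_nhdsWithin] with t (ht : 0 < t)
  rw [mul_pow, ← rpow_natCast (t ^ _) q, ← rpow_mul ht.le,
    div_mul_cancel₀ _ (by exact_mod_cast hq.ne'), ← Nat.cast_add_one, rpow_natCast, mul_comm]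

lemma continuousOn_pow_succ_mul_log_pow (p q : ℕ) (x : ℝ) :
    ContinuousOn (fun t : ℝ => t ^ (p + 1) * log t ^ q) (Icc 0 x) := by
  intro t ht
  rcases ht.1.eq_or_lt with rfl | ht0
  · have h : ContinuousWithinAt (fun t : ℝ => t ^ (p + 1) * log t ^ q) (Ioi 0) 0 := by
      simpa [ContinuousWithinAt] using tendsto_pow_succ_mul_log_pow_nhdsGT_zero p q
    exact (continuousWithinAt_Ioi_iff_Ici.mp h).mono Icc_subset_Ici_self
  · exact ((continuous_pow _).continuousAt.mul
      ((continuousAt_log ht0.ne').pow q)).continuousWithinAt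

lemma intervalIntegrable_pow_succ_mul_log_pow (p q : ℕ) {x : ℝ} (hx : 0 ≤ x) :
    IntervalIntegrable (fun t : ℝ => t ^ (p + 1) * log t ^ q) volume 0 x :=
  (continuousOn_pow_succ_mul_log_pow p q x).intervalIntegrable_of_Icc hx

lemma integral_pow_succ_mul_log_pow_succ (p q : ℕ) {x : ℝ} (hx : 0 ≤ x) :
    ∫ t in (0 : ℝ)..x, t ^ (p + 1) * log t ^ (q + 1) =
      x ^ (p + 2) * log x ^ (q + 1) / (p + 2) -
        (q + 1) / (p + 2) * ∫ t in (0 : ℝ)..x, t ^ (p + 1) * log t ^ q := by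
  have hp : (p : ℝ) + 2 ≠ 0 := by positivity
  have hderiv : ∀ t ∈ Ioo (0 : ℝ) x,
      HasDerivAt (fun t : ℝ => t ^ (p + 2) * log t ^ (q + 1) / (p + 2))
        (t ^ (p + 1) * log t ^ (q + 1) + (q + 1) / (p + 2) * (t ^ (p + 1) * log t ^ q)) t := by
    intro t ht
    have hlog := (hasDerivAt_log ht.1.ne').fun_pow (q + 1)
    rw [Nat.add_sub_cancel] at hlog
    have ht0 := ht.1.ne'
    refine (((hasDerivAt_pow (p + 2) t).mul hlog).div_const _).congr_deriv ?_
    field_simp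
    push_cast
    ring
  have hint₁ := intervalIntegrable_pow_succ_mul_log_pow p (q + 1) hx
  have hint₀ := (intervalIntegrable_pow_succ_mul_log_pow p q hx).const_mul ((q + 1) / (p + 2))
  have hFTC := integral_eq_sub_of_hasDerivAt_of_le hx
    ((continuousOn_pow_succ_mul_log_pow (p + 1) (q + 1) x).div_const _) hderiv (hint₁.add hint₀)
  rw [integral_add hint₁ hint₀, intervalIntegral.integral_const_mul, zero_pow (by omega),
    zero_mul, zero_div, sub_zero] at hFTC
  linarith

lemma integral_pow_succ_mul_log_pow (p m : ℕ) {x : ℝ} (hx : 0 ≤ x) :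
    ∫ t in (0 : ℝ)..x, t ^ (p + 1) * log t ^ m =
      ∑ k ∈ Finset.range (m + 1), (-1) ^ k * m.descFactorial k * log x ^ (m - k) *
        (x ^ (p + 2) / ((p : ℝ) + 2) ^ (k + 1)) := by
  induction m with
  | zero =>
    simp only [pow_zero, mul_one, integral_pow, zero_add, Finset.sum_range_one,
      Nat.descFactorial_zero, Nat.cast_one, pow_one]
    rw [zero_pow (by omega)]
    push_cast
    ring
  | succ q ih =>
    rw [integral_pow_succ_mul_log_pow_succ p q hx, ih, Finset.sum_range_succ' _ (q + 1),
      Finset.mul_sum, sub_eq_neg_add, ← Finset.sum_neg_distrib]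
    simp only [Nat.descFactorial_zero, Nat.succ_sub_succ, Nat.succ_descFactorial_succ]
    have hp : (p : ℝ) + 2 ≠ 0 := by positivity
    congr 1
    · refine Finset.sum_congr rfl fun k _ => ?_
      push_cast
      field_simp
      ring
    · simp only [pow_zero, Nat.cast_one, Nat.sub_zero, zero_add, pow_one, one_mul]
      ring

lemma hasSum_Li {x : ℝ} (hx : |x| < 1) (p : ℕ) :
    HasSum (fun n : ℕ => x ^ (n + 1) / ((n : ℝ) + 1) ^ p) (Li p x) := by
  refine Summable.hasSum (Summable.of_norm_bounded
    ((summable_geometric_of_lt_one (abs_nonneg x) hx).mul_left |x|) fun n => ?_)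
  have hn : (1 : ℝ) ≤ ‖(n : ℝ) + 1‖ := by
    rw [norm_of_nonneg (by positivity)]
    simp
  rw [norm_div, norm_pow, norm_pow, norm_eq_abs, pow_succ']
  exact div_le_self (by positivity) (one_le_pow₀ hn)

lemma hasSum_Li_sub_self {x : ℝ} (hx : |x| < 1) (p : ℕ) :
    HasSum (fun n : ℕ => x ^ (n + 2) / ((n : ℝ) + 2) ^ p) (Li p x - x) := by
  simpa only [Finset.sum_range_one, Nat.cast_zero, zero_add, pow_one, one_pow, div_one,
    Nat.cast_add, Nat.cast_one, add_assoc, one_add_one_eq_two] using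
    (hasSum_nat_add_iff' 1).mpr (hasSum_Li hx p)

lemma Li_one {x : ℝ} (hx : |x| < 1) : Li 1 x = -log (1 - x) :=
  (hasSum_Li hx 1).unique (by simpa using hasSum_pow_div_log_of_abs_lt_one hx)

lemma summable_integral_norm_pow_succ_mul_log_pow (m : ℕ) {x : ℝ} (hx0 : 0 ≤ x) (hx1 : x < 1) :
    Summable fun n : ℕ => ∫ t in Ioc 0 x, ‖t ^ (n + 1) * log t ^ m‖ := by
  obtain ⟨C, hC⟩ := isCompact_Icc.exists_bound_of_continuousOn
    (continuousOn_pow_succ_mul_log_pow 0 m x)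
  refine Summable.of_norm_bounded ((summable_geometric_of_lt_one hx0 hx1).mul_right (C * x))
    fun n => ?_
  have hbound : ∀ t ∈ Ioc 0 x, ‖‖t ^ (n + 1) * log t ^ m‖‖ ≤ x ^ n * C := by
    intro t ⟨ht0, htx⟩
    rw [norm_norm, pow_succ, mul_assoc, norm_mul, norm_pow, norm_of_nonneg ht0.le]
    exact mul_le_mul (pow_le_pow_left₀ ht0.le htx n) (by simpa using hC t ⟨ht0.le, htx⟩)
      (norm_nonneg _) (by positivity)
  calc ‖∫ t in Ioc 0 x, ‖t ^ (n + 1) * log t ^ m‖‖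
      ≤ x ^ n * C * volume.real (Ioc 0 x) :=
        norm_setIntegral_le_of_norm_le_const measure_Ioc_lt_top hbound
    _ = x ^ n * (C * x) := by
      simp only [volume_real_Ioc, sub_zero, hx0, sup_of_le_left]
      ring

lemma hasSum_integral_pow_succ_mul_log_pow (m : ℕ) {x : ℝ} (hx0 : 0 ≤ x) (hx1 : x < 1) :
    HasSum (fun n : ℕ => ∫ t in (0 : ℝ)..x, t ^ (n + 1) * log t ^ m)
      (∫ t in (0 : ℝ)..x, log t ^ m * (t / (1 - t))) := by
  have hint : ∀ n : ℕ, IntegrableOn (fun t : ℝ => t ^ (n + 1) * log t ^ m) (Ioc 0 x) :=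
    fun n => (continuousOn_pow_succ_mul_log_pow n m x).integrableOn_Icc.mono_set Ioc_subset_Icc_self
  have h := hasSum_integral_of_summable_integral_norm hint
    (summable_integral_norm_pow_succ_mul_log_pow m hx0 hx1)
  have hexpand : ∫ t in (0 : ℝ)..x, log t ^ m * (t / (1 - t)) =
      ∫ t in Ioc 0 x, ∑' n : ℕ, t ^ (n + 1) * log t ^ m := by
    rw [intervalIntegral.integral_of_le hx0]
    refine setIntegral_congr_fun measurableSet_Ioc fun t ⟨ht0, htx⟩ => ?_
    have hgeom := (hasSum_geometric_of_lt_one ht0.le (htx.trans_lt hx1)).mul_left t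
    simp only [← pow_succ'] at hgeom
    rw [(hgeom.mul_right _).tsum_eq, mul_comm, div_eq_mul_inv]
  rw [hexpand]
  simpa only [← intervalIntegral.integral_of_le hx0] using h

lemma poch_eq_descFactorial {m j : ℕ} (hj : j ≤ m) :
    poch ((m : ℝ) + 1 - j) j = m.descFactorial j := by
  rw [Nat.descFactorial_eq_prod_range, Nat.cast_prod, ← Finset.prod_range_reflect, poch]
  refine Finset.prod_congr rfl fun i hi => ?_
  rw [Finset.mem_range] at hi
  rw [Nat.cast_sub (by omega), Nat.cast_sub (by omega), Nat.cast_sub (by omega)]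
  push_cast
  ring

lemma sum_descFactorial_mul_pow_eq_poch (m : ℕ) (y : ℝ) :
    ∑ k ∈ Finset.range (m + 1), (-1) ^ k * (m.descFactorial k : ℝ) * y ^ (m - k) =
      -∑ j ∈ Finset.range (m + 1), poch ((m : ℝ) + 1 - j) j * (-1) ^ (j + 1) * y ^ (m - j) := by
  rw [← Finset.sum_neg_distrib]
  refine Finset.sum_congr rfl fun j hj => ?_
  rw [poch_eq_descFactorial (Nat.lt_succ_iff.mp (Finset.mem_range.mp hj))]
  ring

lemma descFactorial_succ_eq_mul_factorial_mul_choose (m i : ℕ) :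
    m.descFactorial (i + 1) = m * (i.factorial * (m - 1).choose i) := by
  cases m with
  | zero => simp
  | succ n =>
    rw [Nat.succ_descFactorial_succ, Nat.descFactorial_eq_factorial_mul_choose, Nat.add_sub_cancel]

lemma sum_descFactorial_mul_pow_mul_Li {x : ℝ} (hx : |x| < 1) (m : ℕ) (y : ℝ) :
    ∑ k ∈ Finset.range (m + 1), (-1) ^ k * (m.descFactorial k : ℝ) * y ^ (m - k) * Li (k + 1) x =
      -log (1 - x) * y ^ m + (m : ℝ) * ∑ j ∈ Finset.Icc 2 (m + 1), (-1 : ℝ) ^ (j - 1)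
          * ((m - 1).choose (j - 2) : ℝ) * ((j - 2).factorial : ℝ) * Li j x * y ^ (m + 1 - j) := by
  rw [Finset.sum_range_succ', ← Finset.Ico_add_one_right_eq_Icc, Finset.sum_Ico_eq_sum_range,
    Finset.mul_sum, add_comm]
  simp only [pow_zero, Nat.descFactorial_zero, Nat.cast_one, one_mul, Nat.sub_zero, zero_add,
    Li_one hx, add_tsub_cancel_left, show m + 1 + 1 - 2 = m by omega]
  congr 1
  · ring
  refine Finset.sum_congr rfl fun i hi => ?_
  rw [Finset.mem_range] at hi
  rw [descFactorial_succ_eq_mul_factorial_mul_choose,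
    show m + 1 - (2 + i) = m - (i + 1) by omega, add_comm 2 i]
  push_cast
  ring

lemma integral_log_pow_mul_div_one_sub_eq_sum_Li (m : ℕ) {x : ℝ} (hx0 : 0 ≤ x) (hx1 : x < 1) :
    ∫ t in (0 : ℝ)..x, log t ^ m * (t / (1 - t)) =
      ∑ k ∈ Finset.range (m + 1),
        (-1) ^ k * (m.descFactorial k : ℝ) * log x ^ (m - k) * (Li (k + 1) x - x) := by
  have hx : |x| < 1 := abs_lt.mpr ⟨by linarith, hx1⟩
  refine (hasSum_integral_pow_succ_mul_log_pow m hx0 hx1).unique ?_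
  simpa only [integral_pow_succ_mul_log_pow _ m hx0] using
    hasSum_sum fun k _ => (hasSum_Li_sub_self hx (k + 1)).mul_left
      ((-1) ^ k * (m.descFactorial k : ℝ) * log x ^ (m - k))

theorem stmt11 (m : ℕ) (x : ℝ) (hx0 : 0 < x) (hx1 : x < 1) :
    (∫ t in (0:ℝ)..x, (Real.log t) ^ m * (t / (1 - t))) =
      x * (∑ j ∈ Finset.range (m + 1), poch ((m : ℝ) + 1 - j) j * (-1 : ℝ) ^ (j + 1)
        * (Real.log x) ^ (m - j))
      - Real.log (1 - x) * (Real.log x) ^ m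
      + (m : ℝ) * ∑ j ∈ Finset.Icc 2 (m + 1), (-1 : ℝ) ^ (j - 1)
          * ((m - 1).choose (j - 2) : ℝ) * ((j - 2).factorial : ℝ)
          * Li j x * (Real.log x) ^ (m + 1 - j) := by
  have hx : |x| < 1 := abs_lt.mpr ⟨by linarith, hx1⟩
  simp only [integral_log_pow_mul_div_one_sub_eq_sum_Li m hx0.le hx1, mul_sub,
    Finset.sum_sub_distrib, sum_descFactorial_mul_pow_mul_Li hx, ← Finset.sum_mul,
    sum_descFactorial_mul_pow_eq_poch]
  ring
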